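/- arXiv:2108.11692 — 5 statements merged into one kernel-verified Lean document; each statement's English description precedes it below -/
import Mathlib

section
/- Let A be a residuated semigroup and m = l∘u the Dedekind–MacNeille closure on subsets of A. Then m is a quantic nucleus on the powerset quantale of A: for all X, Y ⊆ A, (mX) · (mY) ⊆ m(X · Y), where X · Y = {x;y | x ∈ X, y ∈ Y}. -/
/-- The Dedekind–MacNeille closure `m = l ∘ u` is a quantic nucleus on the
powerset quantale of a residuated semigroup: `(mX) · (mY) ⊆ m(X · Y)`. -/
theorem dm_quantic_nucleus {A : Type*} [PartialOrder A] (mul : A → A → A)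
    (hassoc : ∀ a b c : A, mul a (mul b c) = mul (mul a b) c)
    (hmono₁ : ∀ a b c : A, a ≤ b → mul a c ≤ mul b c)
    (hmono₂ : ∀ a b c : A, a ≤ b → mul c a ≤ mul c b)
    (ld rd : A → A → A)
    (hres : ∀ a b c : A, (b ≤ ld a c ↔ mul a b ≤ c) ∧ (mul a b ≤ c ↔ a ≤ rd c b)) :
    let u : Set A → Set A := fun X => {a | ∀ x ∈ X, x ≤ a}
    let l : Set A → Set A := fun X => {a | ∀ x ∈ X, a ≤ x}
    let m : Set A → Set A := fun X => l (u X)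
    let prod : Set A → Set A → Set A := fun X Y => {z | ∃ x ∈ X, ∃ y ∈ Y, z = mul x y}
    ∀ X Y : Set A, prod (m X) (m Y) ⊆ m (prod X Y) := by
  intro u l m prod X Y z hz
  obtain ⟨a, ha, b, hb, rfl⟩ := hz
  intro w hw
  have hb' : ∀ x ∈ X, mul x b ≤ w := by
    intro x hx
    have : b ≤ ld x w := hb _ (fun y hy => (hres x y w).1.mpr (hw _ ⟨x, hx, y, hy, rfl⟩))
    exact (hres x b w).1.mp this
  have : a ≤ rd w b := ha _ (fun x hx => (hres x b w).2.mp (hb' x hx))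
  exact (hres a b w).2.mpr this
end

section
/- In a residuated semigroup A, the map f(a) = ↓a into the quantale of m-closed subsets preserves products: m(↓a · ↓b) = ↓(a;b), where ↓a · ↓b = {x;y | x ≤ a, y ≤ b} and m = l∘u is the Dedekind–MacNeille closure. -/
/-- The map `a ↦ ↓a` preserves products: `m(↓a · ↓b) = ↓(a;b)`. -/
theorem lower_cone_map_mul {A : Type*} [PartialOrder A] (mul : A → A → A)
    (hassoc : ∀ a b c : A, mul a (mul b c) = mul (mul a b) c)
    (hmono₁ : ∀ a b c : A, a ≤ b → mul a c ≤ mul b c)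
    (hmono₂ : ∀ a b c : A, a ≤ b → mul c a ≤ mul c b)
    (ld rd : A → A → A)
    (hres : ∀ a b c : A, (b ≤ ld a c ↔ mul a b ≤ c) ∧ (mul a b ≤ c ↔ a ≤ rd c b)) :
    let u : Set A → Set A := fun X => {x | ∀ y ∈ X, y ≤ x}
    let l : Set A → Set A := fun X => {x | ∀ y ∈ X, x ≤ y}
    let m : Set A → Set A := fun X => l (u X)
    ∀ a b : A,
      m {z | ∃ x, x ≤ a ∧ ∃ y, y ≤ b ∧ z = mul x y} = {z | z ≤ mul a b} := by
  intro u l m a b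
  ext z
  simp only [m, l, u, Set.mem_setOf_eq]
  constructor
  · intro h
    exact h (mul a b) (fun w hw => by
      obtain ⟨x, hx, y, hy, rfl⟩ := hw
      exact le_trans (hmono₁ x a y hx) (hmono₂ y b a hy))
  · intro hz w hw
    exact le_trans hz (hw (mul a b) ⟨a, le_refl a, b, le_refl b, rfl⟩)
end

section
/- In a residuated semigroup A, the map f(a) = ↓a preserves residuals: the residual of ↓b by ↓a in the quantale of m-closed subsets equals ↓(a\b), i.e., the largest m-closed set X with m(↓a · X) ⊆ ↓b is ↓(a\b). -/
/-- The map `a ↦ ↓a` preserves residuals: `↓(a\b)` is the largest m-closed set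
`X` with `m(↓a · X) ⊆ ↓b`. -/
theorem lower_cone_map_residual {A : Type*} [PartialOrder A] (mul : A → A → A)
    (hassoc : ∀ a b c : A, mul a (mul b c) = mul (mul a b) c)
    (hmono₁ : ∀ a b c : A, a ≤ b → mul a c ≤ mul b c)
    (hmono₂ : ∀ a b c : A, a ≤ b → mul c a ≤ mul c b)
    (ld rd : A → A → A)
    (hres : ∀ a b c : A, (b ≤ ld a c ↔ mul a b ≤ c) ∧ (mul a b ≤ c ↔ a ≤ rd c b)) :
    let u : Set A → Set A := fun X => {x | ∀ y ∈ X, y ≤ x}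
    let l : Set A → Set A := fun X => {x | ∀ y ∈ X, x ≤ y}
    let m : Set A → Set A := fun X => l (u X)
    let prod : Set A → Set A → Set A := fun X Y => {z | ∃ x ∈ X, ∃ y ∈ Y, z = mul x y}
    ∀ a b : A,
      m {x | x ≤ ld a b} = {x | x ≤ ld a b} ∧
      m (prod {x | x ≤ a} {x | x ≤ ld a b}) ⊆ {x | x ≤ b} ∧
      ∀ X : Set A, m X = X → m (prod {x | x ≤ a} X) ⊆ {x | x ≤ b} →
        X ⊆ {x | x ≤ ld a b} := by
  intro u l m prod a b
  have hmdown : ∀ c : A, m {x | x ≤ c} = {x | x ≤ c} := by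
    intro c
    ext x
    constructor
    · intro hx
      exact hx c (fun y hy => hy)
    · intro hx y hy
      exact le_trans hx (hy c le_rfl)
  refine ⟨hmdown (ld a b), ?_, ?_⟩
  · -- prod ↓a ↓(a\b) ⊆ ↓b, hence its closure is ⊆ m ↓b = ↓b
    intro z hz
    have : z ≤ b := by
      refine hz b ?_
      rintro y ⟨x, hx, w, hw, rfl⟩
      calc mul x w ≤ mul a w := hmono₁ _ _ _ hx
        _ ≤ mul a (ld a b) := hmono₂ _ _ _ hw
        _ ≤ b := (hres a (ld a b) b).1.mp le_rfl
    exact this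
  · intro X _ hsub x hx
    have hmem : mul a x ∈ m (prod {x | x ≤ a} X) := by
      intro y hy
      exact hy (mul a x) ⟨a, le_rfl, x, hx, rfl⟩
    exact ((hres a x b).1.mpr (hsub hmem))
end

section
/- Every residuated semigroup embeds into a quantale (namely the quantale of Dedekind–MacNeille closed subsets) via a map preserving order, product, and both residuals. Moreover, if the residuated semigroup is finite, the quantale is finite. -/
/-- A quantale: a complete lattice with an associative multiplication preserving
arbitrary suprema in both arguments. -/
structure BundledQuantale where
  Q : Type
  [lat : CompleteLattice Q]
  mul : Q → Q → Q
  assoc : ∀ a b c : Q, mul a (mul b c) = mul (mul a b) c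
  distl : ∀ (a : Q) (S : Set Q), mul a (sSup S) = sSup {x | ∃ s ∈ S, x = mul a s}
  distr : ∀ (a : Q) (S : Set Q), mul (sSup S) a = sSup {x | ∃ s ∈ S, x = mul s a}

attribute [instance] BundledQuantale.lat

/-! The quantale is the Dedekind–MacNeille completion of `A`, the product of two cuts being the
cut generated by the pointwise product of their lower sets. Residuation makes the closure
`s ↦ lowerBounds (upperBounds s)` compatible with pointwise products,
`cl (cl s * cl t) = cl (s * t)`, so associativity and distributivity over joins are inherited from
the pointwise product of sets. Principal cuts multiply like their generators, and
`principal (ld a b)` is the largest cut `X` with `principal a * X ≤ principal b`. -/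

open Set Concept

structure IsResiduated {α : Type*} [Preorder α] (mul ld rd : α → α → α) : Prop where
  gc_left : ∀ a, GaloisConnection (mul a) (ld a)
  gc_right : ∀ b, GaloisConnection (mul · b) (rd · b)

theorem IsResiduated.image2_lowerBounds_upperBounds_subset {α : Type*} [Preorder α]
    {mul ld rd : α → α → α} (h : IsResiduated mul ld rd) (s t : Set α) :
    image2 mul (lowerBounds (upperBounds s)) (lowerBounds (upperBounds t)) ⊆
      lowerBounds (upperBounds (image2 mul s t)) := by
  rintro _ ⟨x, hx, y, hy, rfl⟩ c hc
  have hsy : ∀ a ∈ s, mul a y ≤ c := fun a ha =>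
    (h.gc_left a).l_le <| hy fun b hb => (h.gc_left a).le_u <| hc (mem_image2_of_mem ha hb)
  exact (h.gc_right y).l_le <| hx fun a ha => (h.gc_right y).le_u (hsy a ha)

namespace DedekindCut

variable {α : Type*} [Preorder α]

theorem gc_ofObjects_left : GaloisConnection (ofObjects (α := α) (· ≤ ·)) left :=
  fun _ _ => ofObjects_le_iff

theorem ofObjects_left (X : DedekindCut α) : ofObjects (· ≤ ·) X.left = X :=
  Concept.ofObjects_extent

theorem ofObjects_biUnion {ι : Type*} (I : Set ι) (s : ι → Set α) :
    (ofObjects (· ≤ ·) (⋃ i ∈ I, s i) : DedekindCut α) =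
      ⨆ i ∈ I, ofObjects (· ≤ ·) (s i) :=
  gc_ofObjects_left.l_iSup₂

theorem sSup_eq_ofObjects (S : Set (DedekindCut α)) :
    sSup S = ofObjects (· ≤ ·) (⋃ X ∈ S, X.left) := by
  simp only [ofObjects_biUnion, ofObjects_left, sSup_eq_iSup]

variable (mul : α → α → α)

def image2 (X Y : DedekindCut α) : DedekindCut α :=
  ofObjects (· ≤ ·) (Set.image2 mul X.left Y.left)

theorem image2_le_iff {X Y Z : DedekindCut α} :
    image2 mul X Y ≤ Z ↔ ∀ x ∈ X.left, ∀ y ∈ Y.left, mul x y ∈ Z.left :=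
  ofObjects_le_iff.trans Set.image2_subset_iff

variable {mul} {ld rd : α → α → α}

theorem image2_ofObjects_ofObjects (h : IsResiduated mul ld rd) (s t : Set α) :
    image2 mul (ofObjects (· ≤ ·) s) (ofObjects (· ≤ ·) t) =
      ofObjects (· ≤ ·) (Set.image2 mul s t) := by
  refine le_antisymm ?_ (gc_ofObjects_left.monotone_l (Set.image2_subset ?_ ?_))
  · exact ofObjects_le_iff.2 <| h.image2_lowerBounds_upperBounds_subset s t
  · exact subset_lowerBounds_upperBounds s
  · exact subset_lowerBounds_upperBounds t

theorem image2_ofObjects_left (h : IsResiduated mul ld rd) (s : Set α) (Y : DedekindCut α) :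
    image2 mul (ofObjects (· ≤ ·) s) Y = ofObjects (· ≤ ·) (Set.image2 mul s Y.left) := by
  conv_lhs => rw [← ofObjects_left Y]
  exact image2_ofObjects_ofObjects h s Y.left

theorem image2_ofObjects_right (h : IsResiduated mul ld rd) (X : DedekindCut α) (t : Set α) :
    image2 mul X (ofObjects (· ≤ ·) t) = ofObjects (· ≤ ·) (Set.image2 mul X.left t) := by
  conv_lhs => rw [← ofObjects_left X]
  exact image2_ofObjects_ofObjects h X.left t

theorem image2_principal_principal (h : IsResiduated mul ld rd) (a b : α) :
    image2 mul (principal a) (principal b) = principal (mul a b) := by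
  rw [← ofObject_eq_principal, ← ofObject_eq_principal, image2_ofObjects_ofObjects h,
    Set.image2_singleton]
  exact ofObject_eq_principal _

theorem image2_assoc (h : IsResiduated mul ld rd)
    (hassoc : ∀ a b c, mul a (mul b c) = mul (mul a b) c) (X Y Z : DedekindCut α) :
    image2 mul X (image2 mul Y Z) = image2 mul (image2 mul X Y) Z := by
  change image2 mul X (ofObjects _ (Set.image2 mul Y.left Z.left)) =
    image2 mul (ofObjects _ (Set.image2 mul X.left Y.left)) Z
  rw [image2_ofObjects_right h, image2_ofObjects_left h,
    Set.image2_assoc fun a b c => (hassoc a b c).symm]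

theorem image2_sSup_right (h : IsResiduated mul ld rd) (X : DedekindCut α)
    (S : Set (DedekindCut α)) :
    image2 mul X (sSup S) = sSup (image2 mul X '' S) := by
  rw [sSup_eq_ofObjects, image2_ofObjects_right h, Set.image2_iUnion₂_right,
    ofObjects_biUnion, sSup_image]
  rfl

theorem image2_sSup_left (h : IsResiduated mul ld rd) (X : DedekindCut α)
    (S : Set (DedekindCut α)) :
    image2 mul (sSup S) X = sSup ((image2 mul · X) '' S) := by
  rw [sSup_eq_ofObjects, image2_ofObjects_left h, Set.image2_iUnion₂_left,
    ofObjects_biUnion, sSup_image]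
  rfl

theorem image2_principal_left_le_iff (h : IsResiduated mul ld rd) {a b : α}
    {X : DedekindCut α} :
    image2 mul (principal a) X ≤ principal b ↔ X ≤ principal (ld a b) := by
  rw [image2_le_iff, ← extent_subset_extent_iff]
  simp only [left_principal, mem_Iic]
  refine ⟨fun hle y hy => (h.gc_left a).le_u (hle a le_rfl y hy), fun hle x hx y hy => ?_⟩
  exact ((h.gc_right y).monotone_l hx).trans ((h.gc_left a).l_le (hle hy))

theorem image2_principal_right_le_iff (h : IsResiduated mul ld rd) {a b : α}
    {X : DedekindCut α} :
    image2 mul X (principal b) ≤ principal a ↔ X ≤ principal (rd a b) := by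
  rw [image2_le_iff, ← extent_subset_extent_iff]
  simp only [left_principal, mem_Iic]
  refine ⟨fun hle x hx => (h.gc_right b).le_u (hle x hx b le_rfl), fun hle x hx y hy => ?_⟩
  exact ((h.gc_left x).monotone_l hy).trans ((h.gc_right b).l_le (hle hx))

end DedekindCut

open DedekindCut

theorem residuated_semigroup_embeds_into_quantale_general {A : Type} [PartialOrder A]
    (mul : A → A → A)
    (hassoc : ∀ a b c : A, mul a (mul b c) = mul (mul a b) c)
    (ld rd : A → A → A)
    (hres : ∀ a b c : A, (b ≤ ld a c ↔ mul a b ≤ c) ∧ (mul a b ≤ c ↔ a ≤ rd c b)) :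
    ∃ (Q : BundledQuantale) (f : A → Q.Q),
      Function.Injective f ∧
      (∀ a b : A, a ≤ b ↔ f a ≤ f b) ∧
      (∀ a b : A, f (mul a b) = Q.mul (f a) (f b)) ∧
      (∀ a b : A, f (ld a b) = sSup {c | Q.mul (f a) c ≤ f b}) ∧
      (∀ a b : A, f (rd a b) = sSup {c | Q.mul c (f b) ≤ f a}) ∧
      (Finite A → Finite Q.Q) := by
  have h : IsResiduated mul ld rd :=
    ⟨fun a b c => (hres a b c).1.symm, fun b a c => (hres a b c).2⟩
  have image_eq {g : DedekindCut A → DedekindCut A} (S : Set (DedekindCut A)) :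
      {x | ∃ s ∈ S, x = g s} = g '' S := by
    ext; simp [eq_comm]
  refine ⟨⟨DedekindCut A, image2 mul, image2_assoc h hassoc,
      fun X S => by rw [image2_sSup_right h, image_eq],
      fun X S => by rw [image2_sSup_left h, image_eq]⟩,
    principal, fun _ _ => principal_inj.1, fun _ _ => principal_le_principal.symm,
    fun a b => (image2_principal_principal h a b).symm, fun a b => ?_, fun a b => ?_,
    fun _ => Finite.of_injective _ Concept.extent_injective⟩
  · simp_rw [image2_principal_left_le_iff h]
    exact csSup_Iic.symm
  · simp_rw [image2_principal_right_le_iff h]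
    exact csSup_Iic.symm

/-- Every residuated semigroup embeds into a quantale via a map preserving
order, product and both residuals; if the semigroup is finite, the quantale
can be taken finite. -/
theorem residuated_semigroup_embeds_into_quantale {A : Type} [PartialOrder A]
    (mul : A → A → A)
    (hassoc : ∀ a b c : A, mul a (mul b c) = mul (mul a b) c)
    (hmono₁ : ∀ a b c : A, a ≤ b → mul a c ≤ mul b c)
    (hmono₂ : ∀ a b c : A, a ≤ b → mul c a ≤ mul c b)
    (ld rd : A → A → A)
    (hres : ∀ a b c : A, (b ≤ ld a c ↔ mul a b ≤ c) ∧ (mul a b ≤ c ↔ a ≤ rd c b)) :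
    ∃ (Q : BundledQuantale) (f : A → Q.Q),
      Function.Injective f ∧
      (∀ a b : A, a ≤ b ↔ f a ≤ f b) ∧
      (∀ a b : A, f (mul a b) = Q.mul (f a) (f b)) ∧
      (∀ a b : A, f (ld a b) = sSup {c | Q.mul (f a) c ≤ f b}) ∧
      (∀ a b : A, f (rd a b) = sSup {c | Q.mul c (f b) ≤ f a}) ∧
      (Finite A → Finite Q.Q) :=
  residuated_semigroup_embeds_into_quantale_general mul hassoc ld rd hres
end

section
/- Let Q be a quantale with a set of generators G, and for a ∈ Q define â = {(g,p) ∈ G×Q | g ≤ a;p}. Then the map a ↦ â preserves composition: for all a,b ∈ Q, â ; b̂ = (a;b)^, where ; on relations is relational composition. -/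
/-- The map `a ↦ â` preserves composition: `â ; b̂ = (a;b)^`. -/
theorem hat_map_comp {Q : Type*} [CompleteLattice Q] (mul : Q → Q → Q)
    (hassoc : ∀ a b c : Q, mul a (mul b c) = mul (mul a b) c)
    (hdistl : ∀ (a : Q) (S : Set Q), mul a (sSup S) = sSup {x | ∃ s ∈ S, x = mul a s})
    (hdistr : ∀ (a : Q) (S : Set Q), mul (sSup S) a = sSup {x | ∃ s ∈ S, x = mul s a})
    (G : Set Q)
    (hgen₁ : ∀ q : Q, q ≤ sSup {g ∈ G | g ≤ q})
    (hgen₂ : ∀ g ∈ G, ∀ q₁ q₂ : Q, g ≤ mul q₁ q₂ → ∃ r ∈ G, r ≤ q₂ ∧ g ≤ mul q₁ r) :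
    let hat : Q → Set (Q × Q) := fun a => {gp | gp.1 ∈ G ∧ gp.1 ≤ mul a gp.2}
    let comp : Set (Q × Q) → Set (Q × Q) → Set (Q × Q) :=
      fun R S => {p | ∃ y, (p.1, y) ∈ R ∧ (y, p.2) ∈ S}
    ∀ a b : Q, comp (hat a) (hat b) = hat (mul a b) := by
  intro hat comp a b
  have hmono : ∀ (c y z : Q), y ≤ z → mul c y ≤ mul c z := by
    intro c y z hyz
    have h : mul c (sSup {y, z}) = sSup {x | ∃ s ∈ ({y, z} : Set Q), x = mul c s} :=
      hdistl c {y, z}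
    have hz : sSup ({y, z} : Set Q) = z := by
      rw [sSup_pair]; exact sup_eq_right.mpr hyz
    rw [hz] at h
    rw [h]
    exact le_sSup ⟨y, Or.inl rfl, rfl⟩
  ext ⟨g, p⟩
  constructor
  · rintro ⟨y, ⟨hgG, hg⟩, ⟨hyG, hy⟩⟩
    refine ⟨hgG, ?_⟩
    calc g ≤ mul a y := hg
      _ ≤ mul a (mul b p) := hmono a _ _ hy
      _ = mul (mul a b) p := hassoc a b p
  · rintro ⟨hgG, hg⟩
    rw [← hassoc] at hg
    obtain ⟨r, hrG, hr, hgr⟩ := hgen₂ g hgG a (mul b p) hg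
    exact ⟨r, ⟨hgG, hgr⟩, ⟨hrG, hr⟩⟩
end
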